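/- Let n ≥ m in ℕ and g, h ∈ G, and set P_{g,n} = U_g S^n (S^n)* (U_g)* and P_{h,m} = U_h S^m (S^m)* (U_h)* in B(ℓ²(G)). Then P_{g,n}·P_{h,m} = P_{g,n} if g ∈ h·φ^m(G) (equivalently, if g·φ^n(G) ⊆ h·φ^m(G)), and P_{g,n}·P_{h,m} = 0 otherwise. In particular, for fixed n, the projections P_{g,n} and P_{h,n} are orthogonal whenever g^{-1}h ∉ φ^n(G). -/

import Mathlib

/-!
`P U S g n` is the orthogonal projection onto the closed span of the basis vectors `ξ_x`
with `x` in the coset `g φⁿ(G)`: both `U_g` and `Sⁿ` send basis vectors injectively to basis vectors, so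
their adjoints undo them on the image and kill everything else. Products of such projections
are governed by the inclusion of cosets, and for `m ≤ n` two cosets `g φⁿ(G)` and `h φᵐ(G)`
are either nested or disjoint.
-/

open scoped ComplexInnerProductSpace

/-- `ℓ²(G)`. -/
noncomputable abbrev l2 (G : Type*) := lp (fun _ : G => ℂ) 2

/-- The orthonormal basis vector `ξ_h ∈ ℓ²(G)`. -/
noncomputable def xi (G : Type*) [DecidableEq G] (h : G) : l2 G := lp.single 2 h (1 : ℂ)

/-- `φ^n(G)` as a subgroup of `G`. -/
def rng {G : Type*} [Group G] (φ : Monoid.End G) (n : ℕ) : Subgroup G :=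
  MonoidHom.range ((φ ^ n : Monoid.End G) : G →* G)

/-- The operator `P g n = U_g S^n (S^n)* (U_g)*`. -/
noncomputable def P {G : Type*} (U : G → (l2 G →L[ℂ] l2 G)) (S : l2 G →L[ℂ] l2 G)
    (g : G) (n : ℕ) : l2 G →L[ℂ] l2 G :=
  U g * S ^ n * star (S ^ n) * star (U g)

section Basis

variable {G : Type*} [DecidableEq G]

lemma xi_apply (a b : G) : (xi G a : ∀ _ : G, ℂ) b = if b = a then 1 else 0 := by
  simp [xi, lp.single_apply, Pi.single_apply]

lemma l2_ext_xi {T T' : l2 G →L[ℂ] l2 G} (h : ∀ g : G, T (xi G g) = T' (xi G g)) : T = T' :=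
  lp.ext_continuousLinearMap ENNReal.ofNat_ne_top fun g => ContinuousLinearMap.ext_ring (h g)

lemma inner_xi_left (a : G) (x : l2 G) : ⟪xi G a, x⟫ = x a := by
  simp [xi, lp.inner_single_left]

lemma inner_xi_xi (a b : G) : ⟪xi G a, xi G b⟫ = if a = b then 1 else 0 := by
  rw [inner_xi_left, xi_apply]

lemma star_apply_xi_apply (T : l2 G →L[ℂ] l2 G) (y a : G) :
    (star T (xi G y) : ∀ _ : G, ℂ) a = ⟪T (xi G a), xi G y⟫ := by
  rw [← inner_xi_left, ContinuousLinearMap.star_eq_adjoint,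
    ContinuousLinearMap.adjoint_inner_right]

variable {T : l2 G →L[ℂ] l2 G} {f : G → G}

lemma pow_apply_xi (hT : ∀ x, T (xi G x) = xi G (f x)) (n : ℕ) (x : G) :
    (T ^ n) (xi G x) = xi G (f^[n] x) := by
  induction n generalizing x with
  | zero => rfl
  | succ n ih => rw [pow_succ, mul_apply_eq_comp, hT, ih, Function.iterate_succ_apply]

lemma star_apply_xi_of_injective (hT : ∀ x, T (xi G x) = xi G (f x)) (hf : f.Injective)
    (x : G) : star T (xi G (f x)) = xi G x := by
  refine lp.ext (funext fun a => ?_)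
  simp only [star_apply_xi_apply, hT, inner_xi_xi, xi_apply, hf.eq_iff]

lemma star_apply_xi_of_notMem_range (hT : ∀ x, T (xi G x) = xi G (f x)) {y : G}
    (hy : y ∉ Set.range f) : star T (xi G y) = 0 := by
  refine lp.ext (funext fun a => ?_)
  rw [star_apply_xi_apply, hT, inner_xi_xi, if_neg fun h => hy ⟨a, h⟩]
  rfl

end Basis

section Cosets

variable {G : Type*} [Group G]

lemma rng_antitone {φ : Monoid.End G} {m n : ℕ} (hmn : m ≤ n) : rng φ n ≤ rng φ m := by
  rintro _ ⟨k, rfl⟩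
  refine ⟨φ^[n - m] k, ?_⟩
  change φ^[m] (φ^[n - m] k) = φ^[n] k
  rw [← Function.iterate_add_apply, Nat.add_sub_cancel' hmn]

variable {K H : Subgroup G}

lemma leftCoset_subset_iff (hKH : K ≤ H) (g h : G) :
    h⁻¹ * g ∈ H ↔ {x : G | g⁻¹ * x ∈ K} ⊆ {x : G | h⁻¹ * x ∈ H} := by
  refine ⟨fun hgh x hx => ?_, fun hsub => by simpa using hsub (show g⁻¹ * g ∈ K by simp)⟩
  simpa [mul_assoc] using H.mul_mem hgh (hKH hx)

lemma leftCoset_disjoint (hKH : K ≤ H) {g h : G} (hgh : h⁻¹ * g ∉ H) (x : G)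
    (hx : g⁻¹ * x ∈ K) : h⁻¹ * x ∉ H := fun hhx =>
  hgh (by simpa [mul_assoc] using H.mul_mem hhx (H.inv_mem (hKH hx)))

end Cosets

section Projections

variable {G : Type*} [Group G] [DecidableEq G] {φ : Monoid.End G}
  {U : G → (l2 G →L[ℂ] l2 G)} {S : l2 G →L[ℂ] l2 G}

  (hinj : Function.Injective φ) (hU : ∀ g h : G, U g (xi G h) = xi G (g * h))
  (hS : ∀ h : G, S (xi G h) = xi G (φ h))
include hinj hU hS

open Classical in
lemma P_apply_xi (g : G) (n : ℕ) (x : G) :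
    P U S g n (xi G x) = if g⁻¹ * x ∈ rng φ n then xi G x else 0 := by
  have hSn := pow_apply_xi hS n
  have hU' : star (U g) (xi G x) = xi G (g⁻¹ * x) := by
    simpa using star_apply_xi_of_injective (hU g) (mul_right_injective g) (g⁻¹ * x)
  change U g ((S ^ n) (star (S ^ n) (star (U g) (xi G x)))) = _
  rw [hU']
  split_ifs with hx
  · obtain ⟨k, hk⟩ := hx
    change φ^[n] k = g⁻¹ * x at hk
    rw [← hk, star_apply_xi_of_injective hSn (hinj.iterate n), hSn, hk, hU, mul_inv_cancel_left]
  · rw [star_apply_xi_of_notMem_range hSn fun ⟨k, hk⟩ => hx ⟨k, hk⟩, map_zero, map_zero]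

lemma P_mul_P_of_subset {g h : G} {m n : ℕ}
    (hsub : ∀ x, g⁻¹ * x ∈ rng φ n → h⁻¹ * x ∈ rng φ m) :
    P U S g n * P U S h m = P U S g n :=
  l2_ext_xi fun x => by
    rw [mul_apply_eq_comp, P_apply_xi hinj hU hS h m]
    split_ifs with hhx
    · rfl
    · rw [map_zero, P_apply_xi hinj hU hS, if_neg fun hgx => hhx (hsub x hgx)]

lemma P_mul_P_of_disjoint {g h : G} {m n : ℕ}
    (hdisj : ∀ x, g⁻¹ * x ∈ rng φ n → h⁻¹ * x ∉ rng φ m) :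
    P U S g n * P U S h m = 0 :=
  l2_ext_xi fun x => by
    rw [mul_apply_eq_comp, P_apply_xi hinj hU hS h m]
    split_ifs with hhx
    · rw [P_apply_xi hinj hU hS, if_neg fun hgx => hdisj x hgx hhx, zero_apply]
    · exact map_zero _

end Projections

theorem P_mul_P_general (G : Type*) [Group G] [DecidableEq G]
    (φ : Monoid.End G) (hinj : Function.Injective φ)
    (U : G → (l2 G →L[ℂ] l2 G)) (S : l2 G →L[ℂ] l2 G)
    (hU : ∀ g h : G, U g (xi G h) = xi G (g * h))
    (hS : ∀ h : G, S (xi G h) = xi G (φ h))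
    (m n : ℕ) (hmn : m ≤ n) :
    (∀ g h : G, h⁻¹ * g ∈ rng φ m → P U S g n * P U S h m = P U S g n) ∧
    (∀ g h : G, h⁻¹ * g ∉ rng φ m → P U S g n * P U S h m = 0) ∧
    (∀ g h : G, h⁻¹ * g ∈ rng φ m ↔
      {x : G | g⁻¹ * x ∈ rng φ n} ⊆ {x : G | h⁻¹ * x ∈ rng φ m}) ∧
    (∀ g h : G, g⁻¹ * h ∉ rng φ n → P U S g n * P U S h n = 0) := by
  have hcoset := leftCoset_subset_iff (rng_antitone (φ := φ) hmn)
  refine ⟨fun g h hgh => ?_, fun g h hgh => ?_, hcoset, fun g h hgh => ?_⟩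
  · exact P_mul_P_of_subset hinj hU hS ((hcoset g h).1 hgh)
  · exact P_mul_P_of_disjoint hinj hU hS (leftCoset_disjoint (rng_antitone hmn) hgh)
  · have hhg : h⁻¹ * g ∉ rng φ n := by rwa [← inv_mem_iff, mul_inv_rev, inv_inv]
    exact P_mul_P_of_disjoint hinj hU hS (leftCoset_disjoint le_rfl hhg)

/-- **Statement 7.** Let `n ≥ m` and `g, h ∈ G`, and put `P_{g,n} = U_g S^n (S^n)* (U_g)*`,
`P_{h,m} = U_h S^m (S^m)* (U_h)*`.  Then `P_{g,n}·P_{h,m} = P_{g,n}` if `g ∈ h·φ^m(G)`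
(equivalently, if `g·φ^n(G) ⊆ h·φ^m(G)`), and `P_{g,n}·P_{h,m} = 0` otherwise.  In
particular, for fixed `n`, `P_{g,n}` and `P_{h,n}` are orthogonal whenever
`g⁻¹h ∉ φ^n(G)`. -/
theorem P_mul_P (G : Type*) [Group G] [DecidableEq G]
    (φ : Monoid.End G) (hinj : Function.Injective φ) (hfin : Finite (G ⧸ rng φ 1))
    (U : G → (l2 G →L[ℂ] l2 G)) (S : l2 G →L[ℂ] l2 G)
    (hU : ∀ g h : G, U g (xi G h) = xi G (g * h))
    (hS : ∀ h : G, S (xi G h) = xi G (φ h))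
    (m n : ℕ) (hmn : m ≤ n) :
    (∀ g h : G, h⁻¹ * g ∈ rng φ m → P U S g n * P U S h m = P U S g n) ∧
    (∀ g h : G, h⁻¹ * g ∉ rng φ m → P U S g n * P U S h m = 0) ∧
    (∀ g h : G, h⁻¹ * g ∈ rng φ m ↔
      {x : G | g⁻¹ * x ∈ rng φ n} ⊆ {x : G | h⁻¹ * x ∈ rng φ m}) ∧
    (∀ g h : G, g⁻¹ * h ∉ rng φ n → P U S g n * P U S h n = 0) :=
  P_mul_P_general G φ hinj U S hU hS m n hmn
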